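/- ε-distance is sub-additive under bind: if f, g map elements of A to sub-distributions on B with Δ_ε(f(a), g(a)) ≤ δ' for all a in the support of μ, and μ, ν are sub-distributions on A with Δ_{ε'}(μ, ν) ≤ δ and f = g, then Δ_{ε+ε'}(f⋆μ, f⋆ν) ≤ δ + δ'. In particular, taking ε' = 0 and μ = ν: Δ_ε(f⋆μ, g⋆μ) ≤ δ' whenever Δ_ε(f(a), g(a)) ≤ δ' for all a in the support of μ. -/
import Mathlib


open scoped ENNReal

/-- ε-distance `Δ_ε(μ,ν) = sup_S max(μ(S) - e^ε ν(S), 0)`. -/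
noncomputable def eDist {A : Type*} (ε : ℝ) (μ ν : A → ℝ≥0∞) : ℝ≥0∞ :=
  ⨆ S : Set A, (∑' a : S, μ a) - ENNReal.ofReal (Real.exp ε) * ∑' a : S, ν a

/-- Bind: `(f⋆μ)(b) = ∑_a f a b · μ a`. -/
noncomputable def bindD {A B : Type*} (f : A → B → ℝ≥0∞) (μ : A → ℝ≥0∞) : B → ℝ≥0∞ :=
  fun b => ∑' a, f a b * μ a

lemma tsum_tsub_le_tsum_tsub {ι : Type*} (x y : ι → ℝ≥0∞) :
    (∑' a, x a) - (∑' a, y a) ≤ ∑' a, (x a - y a) := by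
  rw [tsub_le_iff_right, ← ENNReal.tsum_add]
  exact ENNReal.tsum_le_tsum fun a => le_tsub_add

lemma mul_tsub_le_tsub_mul (a b c : ℝ≥0∞) : a * c - b * c ≤ (a - b) * c := by
  rw [tsub_le_iff_right, ← add_mul]
  exact mul_le_mul_left le_tsub_add c

lemma tsum_tsub_eq {ι : Type*} (x y : ι → ℝ≥0∞) (hy : (∑' a, y a) ≠ ∞)
    (hle : ∀ a, y a ≤ x a) :
    (∑' a, (x a - y a)) = (∑' a, x a) - (∑' a, y a) := by
  have hx : (∑' a, x a) = (∑' a, (x a - y a)) + ∑' a, y a := by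
    rw [← ENNReal.tsum_add]
    exact tsum_congr fun a => (tsub_add_cancel_of_le (hle a)).symm
  rw [hx, ENNReal.add_sub_cancel_right hy]

lemma bindD_set_sum {A B : Type*} (f : A → B → ℝ≥0∞) (μ : A → ℝ≥0∞) (S : Set B) :
    (∑' b : S, bindD f μ b) = ∑' a, (∑' b : S, f a b) * μ a := by
  simp only [bindD]
  rw [ENNReal.tsum_comm]
  exact tsum_congr fun a => ENNReal.tsum_mul_right

lemma subsum_le {A : Type*} (S : Set A) (μ : A → ℝ≥0∞) : (∑' a : S, μ a) ≤ ∑' a, μ a := by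
  rw [tsum_subtype]
  exact ENNReal.tsum_le_tsum fun a => Set.indicator_le_self S μ a

lemma tsum_tsub_le_eDist {A : Type*} (ε : ℝ) (μ ν : A → ℝ≥0∞) (hν : (∑' a, ν a) ≤ 1) :
    (∑' a, (μ a - ENNReal.ofReal (Real.exp ε) * ν a)) ≤ eDist ε μ ν := by
  set E := ENNReal.ofReal (Real.exp ε) with hE
  set S : Set A := {a | E * ν a < μ a} with hS
  have h1 : (∑' a : S, (μ a - E * ν a)) = ∑' a, (μ a - E * ν a) := by
    rw [tsum_subtype S (fun a => μ a - E * ν a)]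
    refine tsum_congr fun a => ?_
    by_cases ha : a ∈ S
    · simp [Set.indicator_of_mem ha]
    · have hle : μ a ≤ E * ν a := not_lt.mp (by simpa [hS] using ha)
      simp [Set.indicator_of_notMem ha, tsub_eq_zero_of_le hle]
  have hfin : (∑' a : S, E * ν a) ≠ ∞ := by
    rw [ENNReal.tsum_mul_left]
    exact ENNReal.mul_ne_top ENNReal.ofReal_ne_top
      (lt_of_le_of_lt (le_trans (subsum_le S ν) hν) ENNReal.one_lt_top).ne
  have h2 : (∑' a : S, (μ a - E * ν a)) = (∑' a : S, μ a) - ∑' a : S, E * ν a :=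
    tsum_tsub_eq _ _ hfin fun a => (le_of_lt a.2)
  rw [← h1, h2, ENNReal.tsum_mul_left]
  exact le_iSup (fun T : Set A => (∑' a : T, μ a) - E * ∑' a : T, ν a) S

/-- ε-distance is sub-additive under bind.  First conjunct: if
`Δ_ε(f a, g a) ≤ δ'` on the support of `μ`, `Δ_{ε'}(μ,ν) ≤ δ` and `f = g`,
then `Δ_{ε+ε'}(f⋆μ, f⋆ν) ≤ δ + δ'`.  Second conjunct (the "in particular"
case, `ε' = 0` and `μ = ν`): `Δ_ε(f⋆μ, g⋆μ) ≤ δ'` whenever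
`Δ_ε(f a, g a) ≤ δ'` for all `a` in the support of `μ`. -/
theorem eDist_bind_subadditive {A B : Type*} [Countable A] [Countable B]
    (ε ε' δ δ' : ℝ) (hε : 0 ≤ ε) (hε' : 0 ≤ ε') (hδ : 0 ≤ δ) (hδ' : 0 ≤ δ') :
    (∀ (f g : A → B → ℝ≥0∞) (μ ν : A → ℝ≥0∞),
      (∀ a, (∑' b, f a b) ≤ 1) → (∀ a, (∑' b, g a b) ≤ 1) →
      (∑' a, μ a) ≤ 1 → (∑' a, ν a) ≤ 1 →
      (∀ a, μ a ≠ 0 → eDist ε (f a) (g a) ≤ ENNReal.ofReal δ') →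
      eDist ε' μ ν ≤ ENNReal.ofReal δ →
      f = g →
      eDist (ε + ε') (bindD f μ) (bindD f ν) ≤ ENNReal.ofReal (δ + δ')) ∧
    (∀ (f g : A → B → ℝ≥0∞) (μ : A → ℝ≥0∞),
      (∀ a, (∑' b, f a b) ≤ 1) → (∀ a, (∑' b, g a b) ≤ 1) →
      (∑' a, μ a) ≤ 1 →
      (∀ a, μ a ≠ 0 → eDist ε (f a) (g a) ≤ ENNReal.ofReal δ') →
      eDist ε (bindD f μ) (bindD g μ) ≤ ENNReal.ofReal δ') := by
  constructor
  · intro f g μ ν hf hg hμ hν _ hd _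
    apply iSup_le
    intro S
    set E := ENNReal.ofReal (Real.exp (ε + ε')) with hEdef
    set E' := ENNReal.ofReal (Real.exp ε') with hE'def
    have hEE' : E' ≤ E :=
      ENNReal.ofReal_le_ofReal (Real.exp_le_exp.mpr (by linarith))
    set c : A → ℝ≥0∞ := fun a => ∑' b : S, f a b with hc
    have hc1 : ∀ a, c a ≤ 1 := fun a => le_trans (subsum_le S (f a)) (hf a)
    calc (∑' b : S, bindD f μ b) - E * ∑' b : S, bindD f ν b
        = (∑' a, c a * μ a) - ∑' a, E * (c a * ν a) := by
          rw [bindD_set_sum, bindD_set_sum, ENNReal.tsum_mul_left]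
      _ ≤ ∑' a, (c a * μ a - E * (c a * ν a)) := tsum_tsub_le_tsum_tsub _ _
      _ ≤ ∑' a, (μ a - E' * ν a) := by
          refine ENNReal.tsum_le_tsum fun a => ?_
          have h1 : c a * μ a - E * (c a * ν a) ≤ μ a * c a - (E' * ν a) * c a := by
            apply tsub_le_tsub (le_of_eq (mul_comm _ _))
            calc (E' * ν a) * c a = E' * (c a * ν a) := by ring
              _ ≤ E * (c a * ν a) := mul_le_mul_left hEE' _
          refine h1.trans ((mul_tsub_le_tsub_mul _ _ _).trans ?_)
          exact (mul_le_mul_right (hc1 a) _).trans (by rw [mul_one])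
      _ ≤ eDist ε' μ ν := tsum_tsub_le_eDist ε' μ ν hν
      _ ≤ ENNReal.ofReal δ := hd
      _ ≤ ENNReal.ofReal (δ + δ') := ENNReal.ofReal_le_ofReal (by linarith)
  · intro f g μ hf hg hμ hd
    apply iSup_le
    intro S
    set E := ENNReal.ofReal (Real.exp ε) with hEdef
    set cf : A → ℝ≥0∞ := fun a => ∑' b : S, f a b with hcf
    set cg : A → ℝ≥0∞ := fun a => ∑' b : S, g a b with hcg
    calc (∑' b : S, bindD f μ b) - E * ∑' b : S, bindD g μ b
        = (∑' a, cf a * μ a) - ∑' a, E * (cg a * μ a) := by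
          rw [bindD_set_sum, bindD_set_sum, ENNReal.tsum_mul_left]
      _ ≤ ∑' a, (cf a * μ a - E * (cg a * μ a)) := tsum_tsub_le_tsum_tsub _ _
      _ ≤ ∑' a, ENNReal.ofReal δ' * μ a := by
          refine ENNReal.tsum_le_tsum fun a => ?_
          by_cases ha : μ a = 0
          · simp [ha]
          · have h1 : cf a * μ a - E * (cg a * μ a) ≤ (cf a - E * cg a) * μ a := by
              calc cf a * μ a - E * (cg a * μ a)
                  = cf a * μ a - (E * cg a) * μ a := by rw [mul_assoc]
                _ ≤ (cf a - E * cg a) * μ a := mul_tsub_le_tsub_mul _ _ _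
            refine h1.trans (mul_le_mul_left ?_ _)
            calc cf a - E * cg a
                ≤ eDist ε (f a) (g a) :=
                  le_iSup (fun T : Set B =>
                    (∑' b : T, f a b) - E * ∑' b : T, g a b) S
              _ ≤ ENNReal.ofReal δ' := hd a ha
      _ = ENNReal.ofReal δ' * ∑' a, μ a := ENNReal.tsum_mul_left
      _ ≤ ENNReal.ofReal δ' * 1 := mul_le_mul_right hμ _
      _ = ENNReal.ofReal δ' := mul_one _
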